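/- Let (X,d) be a geodesic metric space in which all geodesic triangles are δ-thin, i.e., for any points x,y,z, any geodesic segments [x,y], [x,z], [y,z], and any points p ∈ [x,y], q ∈ [x,z] with d(x,p) = d(x,q) ≤ (y|z)_x, one has d(p,q) ≤ δ (and the analogous condition at the corners y and z). Then (X,d) is δ-hyperbolic: for all points u,v,w,x ∈ X, (u|w)_x ≥ min{(u|v)_x, (v|w)_x} − δ. -/

import Mathlib

/-
Put `s = min ((u|v)_x, (v|w)_x)` and walk the distance `s` from `x` along geodesics `[x,u]`,
`[x,v]`, `[x,w]`, reaching points `p`, `q`, `r`. Thinness of the triangles `x u v` and `x v w`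
gives `d(p,q) ≤ δ` and `d(q,r) ≤ δ`, so going from `u` to `w` through `p` and `r` gives
`d(u,w) ≤ (d(x,u) - s) + 2δ + (d(x,w) - s)`, which is `(u|w)_x ≥ s - δ`.
-/

/-- The Gromov product `(x|y)_z = ½(d(x,z) + d(z,y) − d(x,y))` in a metric space. -/
noncomputable def gromovProd {X : Type*} [MetricSpace X] (x y z : X) : ℝ :=
  (dist x z + dist z y - dist x y) / 2

/-- `f : ℝ → X` parametrizes (by arc length) a geodesic segment joining `x` and `y`. -/
def IsGeodesicSegment {X : Type*} [MetricSpace X] (x y : X) (f : ℝ → X) : Prop :=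
  f 0 = x ∧ f (dist x y) = y ∧
    ∀ s ∈ Set.Icc (0 : ℝ) (dist x y), ∀ t ∈ Set.Icc (0 : ℝ) (dist x y),
      dist (f s) (f t) = |s - t|

/-- A metric space is geodesic if any two points are joined by a geodesic segment. -/
def IsGeodesicSpace (X : Type*) [MetricSpace X] : Prop :=
  ∀ x y : X, ∃ f : ℝ → X, IsGeodesicSegment x y f

section

variable {X : Type*} [MetricSpace X]

theorem gromovProd_nonneg (x y z : X) : 0 ≤ gromovProd x y z := by
  unfold gromovProd
  linarith [dist_triangle x z y]

theorem gromovProd_le_dist_left (x y z : X) : gromovProd x y z ≤ dist z x := by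
  unfold gromovProd
  linarith [dist_triangle z x y, dist_comm x z]

theorem gromovProd_le_dist_right (x y z : X) : gromovProd x y z ≤ dist z y := by
  unfold gromovProd
  linarith [dist_triangle x y z, dist_comm y z]

theorem IsGeodesicSegment.dist_apply_right {x y : X} {f : ℝ → X} (hf : IsGeodesicSegment x y f)
    {s : ℝ} (hs₀ : 0 ≤ s) (hs : s ≤ dist x y) : dist (f s) y = dist x y - s := by
  obtain ⟨-, hfy, hiso⟩ := hf
  have := hiso s ⟨hs₀, hs⟩ (dist x y) ⟨dist_nonneg, le_rfl⟩
  rw [hfy, abs_of_nonpos (by linarith)] at this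
  linarith

theorem sub_half_dist_le_gromovProd {x u w : X} {f h : ℝ → X}
    (hf : IsGeodesicSegment x u f) (hh : IsGeodesicSegment x w h)
    {s : ℝ} (hs₀ : 0 ≤ s) (hsu : s ≤ dist x u) (hsw : s ≤ dist x w) :
    s - dist (f s) (h s) / 2 ≤ gromovProd u w x := by
  have hpath : dist u w ≤ dist (f s) u + dist (f s) (h s) + dist (h s) w := by
    linarith [dist_triangle4 u (f s) (h s) w, dist_comm u (f s)]
  rw [hf.dist_apply_right hs₀ hsu, hh.dist_apply_right hs₀ hsw] at hpath
  unfold gromovProd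
  linarith [dist_comm u x, dist_comm w x]

end

theorem stmt_10_general {X : Type*} [MetricSpace X] (δ : ℝ)
    (hgeo : IsGeodesicSpace X)
    (hthin : ∀ (x y z : X) (f g : ℝ → X), IsGeodesicSegment x y f → IsGeodesicSegment x z g →
      ∀ s : ℝ, 0 ≤ s → s ≤ gromovProd y z x → dist (f s) (g s) ≤ δ) :
    ∀ u v w x : X, min (gromovProd u v x) (gromovProd v w x) - δ ≤ gromovProd u w x := by
  intro u v w x
  obtain ⟨f, hf⟩ := hgeo x u
  obtain ⟨g, hg⟩ := hgeo x v
  obtain ⟨h, hh⟩ := hgeo x w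
  set s := min (gromovProd u v x) (gromovProd v w x)
  have hs₀ : 0 ≤ s := le_min (gromovProd_nonneg u v x) (gromovProd_nonneg v w x)
  have hsuv : s ≤ gromovProd u v x := min_le_left _ _
  have hsvw : s ≤ gromovProd v w x := min_le_right _ _
  have hfg : dist (f s) (g s) ≤ δ := hthin x u v f g hf hg s hs₀ hsuv
  have hgh : dist (g s) (h s) ≤ δ := hthin x v w g h hg hh s hs₀ hsvw
  have hbound := sub_half_dist_le_gromovProd hf hh hs₀
    (hsuv.trans (gromovProd_le_dist_left u v x)) (hsvw.trans (gromovProd_le_dist_right v w x))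
  linarith [dist_triangle (f s) (g s) (h s)]

/-- A geodesic metric space with `δ`-thin geodesic triangles (thinness stated at every
corner, since `x`, `y`, `z` range over all points) is `δ`-hyperbolic. -/
theorem stmt_10 {X : Type*} [MetricSpace X] (δ : ℝ) (hδ : 0 ≤ δ)
    (hgeo : IsGeodesicSpace X)
    (hthin : ∀ (x y z : X) (f g : ℝ → X), IsGeodesicSegment x y f → IsGeodesicSegment x z g →
      ∀ s : ℝ, 0 ≤ s → s ≤ gromovProd y z x → dist (f s) (g s) ≤ δ) :
    ∀ u v w x : X, min (gromovProd u v x) (gromovProd v w x) - δ ≤ gromovProd u w x :=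
  stmt_10_general δ hgeo hthin
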